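/- arXiv:1410.0483 — 2 statements merged into one kernel-verified Lean document; each statement's English description precedes it below -/
import Mathlib

section
/- Let S be a countably-based, simple, nonelementary Cu-semigroup satisfying (O5), (O6) and weak cancellation. Then every nonzero compact element p ∈ S has a predecessor: there exists c ∈ S such that c is the greatest element of { x ∈ S : x < p } and p ≤ c + z for every nonzero z ∈ S; moreover, c is the unique element of S satisfying c < p and p ≤ c + z for all nonzero z ∈ S. -/
open scoped ENNReal

/-- The (sequential) way-below relation: `a ≪ b` if for every increasing
sequence `f` with a supremum `s` such that `b ≤ s`, some `f n` dominates `a`. -/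
def CuWayBelow {S : Type*} [Preorder S] (a b : S) : Prop :=
  ∀ f : ℕ → S, Monotone f → ∀ s : S, IsLUB (Set.range f) s → b ≤ s → ∃ n : ℕ, a ≤ f n

/-- An abstract Cu-semigroup: a positively ordered monoid satisfying the
axioms (O1)-(O4). -/
structure IsCuSemigroup (S : Type*) [AddCommMonoid S] [PartialOrder S] : Prop where
  /-- addition is order-preserving -/
  add_le_add : ∀ a b c : S, a ≤ b → a + c ≤ b + c
  /-- `0` is the least element -/
  zero_le : ∀ a : S, 0 ≤ a
  /-- (O1) every increasing sequence has a supremum -/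
  O1 : ∀ f : ℕ → S, Monotone f → ∃ s : S, IsLUB (Set.range f) s
  /-- (O2) every element is the supremum of a rapidly increasing sequence -/
  O2 : ∀ a : S, ∃ f : ℕ → S, (∀ n : ℕ, CuWayBelow (f n) (f (n + 1))) ∧ IsLUB (Set.range f) a
  /-- (O3) way-below is additive -/
  O3 : ∀ a' a b' b : S, CuWayBelow a' a → CuWayBelow b' b → CuWayBelow (a' + b') (a + b)
  /-- (O4) suprema of increasing sequences are additive -/
  O4 : ∀ f g : ℕ → S, Monotone f → Monotone g → ∀ s t : S, IsLUB (Set.range f) s →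
    IsLUB (Set.range g) t → IsLUB (Set.range (fun n => f n + g n)) (s + t)

/-- An ideal of a Cu-semigroup: an order-hereditary submonoid closed under
suprema of increasing sequences. -/
structure IsCuIdeal {S : Type*} [AddCommMonoid S] [PartialOrder S] (I : Set S) : Prop where
  zero_mem : (0 : S) ∈ I
  add_mem : ∀ a b : S, a ∈ I → b ∈ I → a + b ∈ I
  mem_of_le : ∀ a b : S, a ≤ b → b ∈ I → a ∈ I
  lub_mem : ∀ f : ℕ → S, Monotone f → (∀ n : ℕ, f n ∈ I) → ∀ s : S, IsLUB (Set.range f) s → s ∈ I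

/-- A Cu-semigroup is simple if its only ideals are `{0}` and the whole
semigroup. -/
def CuSimple (S : Type*) [AddCommMonoid S] [PartialOrder S] : Prop :=
  ∀ I : Set S, IsCuIdeal I → I = {0} ∨ I = Set.univ

/-- Axiom (O5): almost algebraic order. -/
def CuO5 (S : Type*) [AddCommMonoid S] [PartialOrder S] : Prop :=
  ∀ a' a b' b c : S, a + b ≤ c → CuWayBelow a' a → CuWayBelow b' b →
    ∃ x : S, a' + x ≤ c ∧ c ≤ a + x ∧ b' ≤ x

/-- Axiom (O6): almost Riesz decomposition. -/
def CuO6 (S : Type*) [AddCommMonoid S] [PartialOrder S] : Prop :=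
  ∀ a' a b c : S, CuWayBelow a' a → a ≤ b + c →
    ∃ e f : S, a' ≤ e + f ∧ e ≤ a ∧ e ≤ b ∧ f ≤ a ∧ f ≤ c

/-- Weak cancellation: `a + x ≪ b + x` implies `a ≪ b`. -/
def CuWeaklyCancellative (S : Type*) [AddCommMonoid S] [PartialOrder S] : Prop :=
  ∀ a b x : S, CuWayBelow (a + x) (b + x) → CuWayBelow a b

section Aux

variable {S : Type*} [AddCommMonoid S] [PartialOrder S]

lemma cu_wb_le {a b : S} (h : CuWayBelow a b) : a ≤ b := by
  obtain ⟨n, hn⟩ := h (fun _ => b) monotone_const b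
    (by rw [Set.range_const]; exact isLUB_singleton) le_rfl
  exact hn

lemma cu_wb_mono {a b c d : S} (h1 : a ≤ b) (h2 : CuWayBelow b c) (h3 : c ≤ d) :
    CuWayBelow a d := by
  intro f hf s hs hds
  obtain ⟨n, hn⟩ := h2 f hf s hs (h3.trans hds)
  exact ⟨n, h1.trans hn⟩

lemma cu_zero_wb (hS : IsCuSemigroup S) (b : S) : CuWayBelow (0 : S) b :=
  fun _ _ _ _ _ => ⟨0, hS.zero_le _⟩

lemma cu_add_le_add' (hS : IsCuSemigroup S) {a b c d : S} (h1 : a ≤ b) (h2 : c ≤ d) :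
    a + c ≤ b + d := by
  calc a + c ≤ b + c := hS.add_le_add a b c h1
    _ = c + b := add_comm _ _
    _ ≤ d + b := hS.add_le_add c d b h2
    _ = b + d := add_comm _ _

lemma cu_le_add_left (hS : IsCuSemigroup S) (a b : S) : a ≤ b + a := by
  have := hS.add_le_add 0 b a (hS.zero_le b)
  rwa [zero_add] at this

lemma cu_le_add_right (hS : IsCuSemigroup S) (a b : S) : a ≤ a + b := by
  rw [add_comm]; exact cu_le_add_left hS a b

lemma cu_exists_nonzero_wb (hS : IsCuSemigroup S) {a : S} (ha : a ≠ 0) :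
    ∃ b : S, b ≠ 0 ∧ CuWayBelow b a := by
  obtain ⟨f, hf, hfl⟩ := hS.O2 a
  by_cases h : ∀ n, f n = 0
  · exfalso
    have : a ≤ 0 := hfl.2 (by rintro y ⟨n, rfl⟩; exact (h n).le)
    exact ha (le_antisymm this (hS.zero_le a))
  · push_neg at h
    obtain ⟨n, hn⟩ := h
    exact ⟨f n, hn, cu_wb_mono le_rfl (hf n) (hfl.1 ⟨n + 1, rfl⟩)⟩

/-- the weak-cancellation absorption trick -/
lemma cu_absorb (hwc : CuWeaklyCancellative S) {p x θ N : S} (hpc : CuWayBelow p p)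
    (h1 : x + θ ≤ p) (h2 : p ≤ θ + N) : x ≤ N := by
  have h3 : CuWayBelow (x + θ) (N + θ) :=
    cu_wb_mono h1 hpc (by rw [add_comm]; exact h2)
  exact cu_wb_le (hwc x N θ h3)

/-- simplicity: everything is absorbed by multiples of any nonzero element -/
lemma cu_simple_absorb (hS : IsCuSemigroup S) (hsimple : CuSimple S) {z : S} (hz : z ≠ 0) :
    ∀ a' a : S, CuWayBelow a' a → ∃ n : ℕ, a' ≤ n • z := by
  set I : Set S := {x | ∀ y : S, CuWayBelow y x → ∃ n : ℕ, y ≤ n • z} with hI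
  have hideal : IsCuIdeal I := by
    constructor
    · intro y hy
      exact ⟨0, by simpa [zero_nsmul] using cu_wb_le hy⟩
    · intro a b ha hb y hy
      obtain ⟨f, hf, hfl⟩ := hS.O2 a
      obtain ⟨g, hg, hgl⟩ := hS.O2 b
      have hfm : Monotone f := monotone_nat_of_le_succ fun n => cu_wb_le (hf n)
      have hgm : Monotone g := monotone_nat_of_le_succ fun n => cu_wb_le (hg n)
      have hsum := hS.O4 f g hfm hgm a b hfl hgl
      have hm : Monotone fun n => f n + g n := fun m n hmn =>
        cu_add_le_add' hS (hfm hmn) (hgm hmn)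
      obtain ⟨n, hn⟩ := hy _ hm _ hsum le_rfl
      obtain ⟨n₁, h₁⟩ := ha (f n) (cu_wb_mono le_rfl (hf n) (hfl.1 ⟨n + 1, rfl⟩))
      obtain ⟨n₂, h₂⟩ := hb (g n) (cu_wb_mono le_rfl (hg n) (hgl.1 ⟨n + 1, rfl⟩))
      exact ⟨n₁ + n₂, by rw [add_nsmul]; exact hn.trans (cu_add_le_add' hS h₁ h₂)⟩
    · intro a b hab hb y hy
      exact hb y (cu_wb_mono le_rfl hy hab)
    · intro f hf hmem s hlub y hy
      obtain ⟨g, hg, hgl⟩ := hS.O2 s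
      have hgm : Monotone g := monotone_nat_of_le_succ fun n => cu_wb_le (hg n)
      obtain ⟨m, hm⟩ := hy g hgm s hgl le_rfl
      have h2 : CuWayBelow (g (m + 1)) s :=
        cu_wb_mono le_rfl (hg (m + 1)) (hgl.1 ⟨m + 2, rfl⟩)
      obtain ⟨k, hk⟩ := h2 f hf s hlub le_rfl
      exact hmem k y (cu_wb_mono hm (hg m) hk)
  rcases hsimple I hideal with h | h
  · exfalso
    have hzI : z ∈ I := fun y hy => ⟨1, by simpa [one_nsmul] using cu_wb_le hy⟩
    rw [h] at hzI
    exact hz hzI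
  · intro a' a h'
    have : a ∈ I := by rw [h]; trivial
    exact this a' h'

/-- common nonzero lower bounds exist in a simple Cu-semigroup with O6 -/
lemma cu_common_lower (hS : IsCuSemigroup S) (hsimple : CuSimple S) (hO6 : CuO6 S)
    {u r : S} (hu : u ≠ 0) (hr : r ≠ 0) : ∃ g : S, g ≠ 0 ∧ g ≤ u ∧ g ≤ r := by
  obtain ⟨u', hu'ne, hu'wb⟩ := cu_exists_nonzero_wb hS hu
  obtain ⟨r₁, hr₁ne, hr₁wb⟩ := cu_exists_nonzero_wb hS hr
  obtain ⟨n, hn⟩ := cu_simple_absorb hS hsimple hu'ne r₁ r hr₁wb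
  have aux : ∀ n : ℕ, ∀ a a' : S, CuWayBelow a' a → a ≤ n • u' → a' ≠ 0 →
      ∃ g : S, g ≠ 0 ∧ g ≤ u' ∧ g ≤ a := by
    intro n
    induction n with
    | zero =>
      intro a a' hwb ha ha'
      exact absurd (le_antisymm ((cu_wb_le hwb).trans
        (by simpa [zero_nsmul] using ha)) (hS.zero_le _)) ha'
    | succ n ih =>
      intro a a' hwb ha ha'
      obtain ⟨e, f, h1, h2, h3, h4, h5⟩ := hO6 a' a (n • u') u' hwb
        (by rw [succ_nsmul] at ha; exact ha)
      by_cases hf : f = 0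
      · rw [hf, add_zero] at h1
        obtain ⟨a'', ha''ne, ha''wb⟩ := cu_exists_nonzero_wb hS ha'
        obtain ⟨g, gne, gu, ge⟩ := ih e a'' (cu_wb_mono le_rfl ha''wb h1) h3 ha''ne
        exact ⟨g, gne, gu, ge.trans h2⟩
      · exact ⟨f, hf, h5, h4⟩
  obtain ⟨r₂, hr₂ne, hr₂wb⟩ := cu_exists_nonzero_wb hS hr₁ne
  obtain ⟨g, gne, gu, gr⟩ := aux n r₁ r₂ hr₂wb hn hr₂ne
  exact ⟨g, gne, gu.trans (cu_wb_le hu'wb), gr.trans (cu_wb_le hr₁wb)⟩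

/-- complement via O5 -/
lemma cu_complement (hO5 : CuO5 S) (hS : IsCuSemigroup S) {x x' p : S}
    (hxp : x ≤ p) (hx' : CuWayBelow x' x) : ∃ w : S, x' + w ≤ p ∧ p ≤ x + w := by
  obtain ⟨w, h1, h2, _⟩ := hO5 x' x 0 0 p (by simpa using hxp) hx' (cu_zero_wb hS 0)
  exact ⟨w, h1, h2⟩

end Aux

set_option maxHeartbeats 1000000 in
/-- Let `S` be a countably-based, simple, nonelementary
Cu-semigroup satisfying (O5), (O6) and weak cancellation.  Then every nonzero
compact element `p ∈ S` has a predecessor: a greatest element `c` of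
`{x | x < p}` which moreover satisfies `p ≤ c + z` for every nonzero `z`, and
`c` is the unique element with `c < p` and `p ≤ c + z` for all nonzero `z`. -/
theorem stmt12 {S : Type*} [AddCommMonoid S] [PartialOrder S]
    (hS : IsCuSemigroup S)
    (hcb : ∃ B : Set S, B.Countable ∧
      ∀ a' a : S, CuWayBelow a' a → ∃ b ∈ B, a' ≤ b ∧ CuWayBelow b a)
    (hsimple : CuSimple S)
    (hnonelem : (∃ a : S, a ≠ 0) ∧ ¬ ∃ a : S, a ≠ 0 ∧ ∀ b : S, b ≠ 0 → b ≤ a → b = a)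
    (hO5 : CuO5 S) (hO6 : CuO6 S) (hwc : CuWeaklyCancellative S)
    (p : S) (hp : p ≠ 0) (hpc : CuWayBelow p p) :
    ∃ c : S, IsGreatest {x : S | x < p} c ∧ (∀ z : S, z ≠ 0 → p ≤ c + z) ∧
      ∀ c' : S, c' < p → (∀ z : S, z ≠ 0 → p ≤ c' + z) → c' = c := by
  classical
  obtain ⟨B, hBc, hB⟩ := hcb
  -- p itself is a basis element
  have hpB : p ∈ B := by
    obtain ⟨b, hbB, hpb, hbp⟩ := hB p p hpc
    have : b = p := le_antisymm (cu_wb_le hbp) hpb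
    rwa [this] at hbB
  -- enumeration of nonzero basis elements
  have hUc : Set.Countable {b ∈ B | b ≠ 0} := hBc.mono (Set.sep_subset _ _)
  obtain ⟨ufun, hufun⟩ := hUc.exists_eq_range ⟨p, hpB, hp⟩
  have hufun_ne : ∀ k, ufun k ≠ 0 := fun k =>
    (show ufun k ∈ {b ∈ B | b ≠ 0} from hufun ▸ Set.mem_range_self k).2
  -- coinitiality of the enumeration among nonzero elements
  have hcoin : ∀ z : S, z ≠ 0 → ∃ m, ufun m ≤ z := by
    intro z hz
    obtain ⟨z', hz', hz'wb⟩ := cu_exists_nonzero_wb hS hz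
    obtain ⟨b, hbB, hzb, hbz⟩ := hB z' z hz'wb
    have hbne : b ≠ 0 := fun h => hz' (le_antisymm (h ▸ hzb) (hS.zero_le _))
    have hbU : b ∈ {b ∈ B | b ≠ 0} := ⟨hbB, hbne⟩
    rw [hufun] at hbU
    obtain ⟨m, hm⟩ := hbU
    exact ⟨m, by rw [hm]; exact cu_wb_le hbz⟩
  -- enumeration of "robust" basis elements, with witnesses
  have hEc : Set.Countable {b ∈ B | ∃ w : S, w ≠ 0 ∧ b + w ≤ p} :=
    hBc.mono (Set.sep_subset _ _)
  have hEnum : ∃ δ wit : ℕ → S, (∀ k, wit k ≠ 0 ∧ δ k + wit k ≤ p) ∧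
      ∀ b ∈ {b ∈ B | ∃ w : S, w ≠ 0 ∧ b + w ≤ p}, ∃ k, δ k = b := by
    rcases Set.eq_empty_or_nonempty {b ∈ B | ∃ w : S, w ≠ 0 ∧ b + w ≤ p} with hE | hE
    · exact ⟨fun _ => 0, fun _ => p, fun _ => ⟨hp, (zero_add p).le⟩, by simp [hE]⟩
    · obtain ⟨δ, hδ⟩ := hEc.exists_eq_range hE
      have hmem : ∀ k, δ k ∈ {b ∈ B | ∃ w : S, w ≠ 0 ∧ b + w ≤ p} :=
        fun k => hδ ▸ Set.mem_range_self k
      refine ⟨δ, fun k => (hmem k).2.choose, fun k =>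
        ⟨(hmem k).2.choose_spec.1, (hmem k).2.choose_spec.2⟩, ?_⟩
      intro b hb
      rw [hδ] at hb
      exact hb
  obtain ⟨δ, wit, hwit, hEcov⟩ := hEnum
  -- stage lemma
  have stage : ∀ v r : S, r ≠ 0 → v + r ≤ p → ∀ i j : ℕ,
      ∃ w : S × S, w.2 ≠ 0 ∧ w.1 + w.2 ≤ p ∧ v ≤ w.1 ∧ δ i ≤ w.1 ∧ p ≤ w.1 + ufun j := by
    intro v r hr hvr i j
    obtain ⟨θ₁, hθ₁ne, hθ₁r, hθ₁w⟩ := cu_common_lower hS hsimple hO6 hr (hwit i).1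
    obtain ⟨θ, hθne, hθle, hθu⟩ := cu_common_lower hS hsimple hO6 hθ₁ne (hufun_ne j)
    have hθr : θ ≤ r := hθle.trans hθ₁r
    have hθw : θ ≤ wit i := hθle.trans hθ₁w
    obtain ⟨θ', hθ'ne, hθ'wb⟩ := cu_exists_nonzero_wb hS hθne
    have hθp : θ + 0 ≤ p := by
      rw [add_zero]
      exact (hθr.trans (cu_le_add_left hS r v)).trans hvr
    obtain ⟨N, hN1, hN2, _⟩ := hO5 θ' θ 0 0 p hθp hθ'wb (cu_zero_wb hS 0)
    refine ⟨(N, θ'), hθ'ne, ?_, ?_, ?_, ?_⟩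
    · show N + θ' ≤ p
      rw [add_comm]; exact hN1
    · exact cu_absorb hwc hpc (le_trans (cu_add_le_add' hS le_rfl hθr) hvr) hN2
    · exact cu_absorb hwc hpc (le_trans (cu_add_le_add' hS le_rfl hθw) (hwit i).2) hN2
    · calc p ≤ θ + N := hN2
        _ ≤ ufun j + N := hS.add_le_add θ (ufun j) N hθu
        _ = N + ufun j := add_comm _ _
  choose F hF using stage
  -- the recursive sequence
  let Sub := {vr : S × S // vr.2 ≠ 0 ∧ vr.1 + vr.2 ≤ p}
  let stepf : ℕ → Sub → Sub := fun k w =>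
    ⟨F w.1.1 w.1.2 w.2.1 w.2.2 (Nat.unpair k).1 (Nat.unpair k).2,
     (hF w.1.1 w.1.2 w.2.1 w.2.2 (Nat.unpair k).1 (Nat.unpair k).2).1,
     (hF w.1.1 w.1.2 w.2.1 w.2.2 (Nat.unpair k).1 (Nat.unpair k).2).2.1⟩
  let W : ℕ → Sub := fun k => Nat.rec (⟨(0, p), hp, (zero_add p).le⟩ : Sub) stepf k
  let v : ℕ → S := fun k => (W k).1.1
  have key : ∀ k, v k ≤ v (k + 1) ∧ δ (Nat.unpair k).1 ≤ v (k + 1) ∧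
      p ≤ v (k + 1) + ufun (Nat.unpair k).2 := by
    intro k
    have h := hF (W k).1.1 (W k).1.2 (W k).2.1 (W k).2.2 (Nat.unpair k).1 (Nat.unpair k).2
    exact ⟨h.2.2.1, h.2.2.2.1, h.2.2.2.2⟩
  have hmono : Monotone v := monotone_nat_of_le_succ fun k => (key k).1
  obtain ⟨c, hc⟩ := hS.O1 v hmono
  have hvle : ∀ k, v k ≤ c := fun k => hc.1 ⟨k, rfl⟩
  have hvp : ∀ k, v k ≤ p := fun k =>
    (cu_le_add_right hS (v k) (W k).1.2).trans (W k).2.2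
  have hcp : c ≤ p := hc.2 (by rintro y ⟨k, rfl⟩; exact hvp k)
  have hnpc : ¬ p ≤ c := by
    intro hpc2
    obtain ⟨k, hk⟩ := hpc v hmono c hc hpc2
    have h1 : (W k).1.2 + v k ≤ p := by rw [add_comm]; exact (W k).2.2
    have h2 : p ≤ 0 + v k := by rw [zero_add]; exact hk
    have h3 := hwc (W k).1.2 0 (v k) (cu_wb_mono h1 hpc h2)
    exact (W k).2.1 (le_antisymm (cu_wb_le h3) (hS.zero_le _))
  have hclt : c < p := lt_of_le_of_ne hcp (fun h => hnpc (h ▸ le_rfl))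
  have dcov : ∀ m, δ m ≤ c := by
    intro m
    have h := (key (Nat.pair m 0)).2.1
    rw [Nat.unpair_pair] at h
    exact h.trans (hvle (Nat.pair m 0 + 1))
  have ucov : ∀ m, p ≤ c + ufun m := by
    intro m
    have h := (key (Nat.pair 0 m)).2.2
    rw [Nat.unpair_pair] at h
    exact h.trans (hS.add_le_add _ _ _ (hvle (Nat.pair 0 m + 1)))
  have hcz : ∀ z : S, z ≠ 0 → p ≤ c + z := by
    intro z hz
    obtain ⟨m, hm⟩ := hcoin z hz
    exact (ucov m).trans (cu_add_le_add' hS le_rfl hm)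
  have hub : ∀ x : S, x < p → x ≤ c := by
    intro x hx
    obtain ⟨h, hh, hhl⟩ := hS.O2 x
    refine hhl.2 ?_
    rintro y ⟨i, rfl⟩
    obtain ⟨b, hbB, hib, hbwb⟩ := hB (h i) (h (i + 1)) (hh i)
    have hbx : CuWayBelow b x := cu_wb_mono le_rfl hbwb (hhl.1 ⟨i + 1, rfl⟩)
    obtain ⟨w, hw1, hw2⟩ := cu_complement hO5 hS hx.le hbx
    have hwne : w ≠ 0 := by
      intro h0
      rw [h0, add_zero] at hw2
      exact hx.ne (le_antisymm hx.le hw2)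
    obtain ⟨m, hm⟩ := hEcov b ⟨hbB, w, hwne, hw1⟩
    calc h i ≤ b := hib
      _ = δ m := hm.symm
      _ ≤ c := dcov m
  refine ⟨c, ⟨hclt, fun x hx => hub x hx⟩, hcz, ?_⟩
  intro c' hc'lt hc'z
  refine le_antisymm (hub c' hc'lt) ?_
  obtain ⟨h, hh, hhl⟩ := hS.O2 c
  refine hhl.2 ?_
  rintro y ⟨i, rfl⟩
  have hwb : CuWayBelow (h (i + 1)) c :=
    cu_wb_mono le_rfl (hh (i + 1)) (hhl.1 ⟨i + 2, rfl⟩)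
  obtain ⟨w, hw1, hw2⟩ := cu_complement hO5 hS hcp hwb
  have hwne : w ≠ 0 := by
    intro h0
    rw [h0, add_zero] at hw2
    exact hnpc hw2
  obtain ⟨w₁, hw₁ne, hw₁wb⟩ := cu_exists_nonzero_wb hS hwne
  have hle : h i + w₁ ≤ p :=
    le_trans (cu_add_le_add' hS (cu_wb_le (hh i)) (cu_wb_le hw₁wb)) hw1
  have hup : p ≤ c' + w₁ := hc'z w₁ hw₁ne
  exact cu_wb_le (hwc (h i) c' w₁ (cu_wb_mono hle hpc hup))
end

section
/- Let S be an almost unperforated Cu-semigroup and let a, b ∈ S with a soft. Then a ≤ b if and only if λ(a) ≤ λ(b) for every functional λ on S. -/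
open scoped ENNReal

/-- A functional on a Cu-semigroup: an additive, order-preserving map to
`[0,∞]` preserving `0` and suprema of increasing sequences. -/
structure IsCuFunctional {S : Type*} [AddCommMonoid S] [PartialOrder S] (l : S → ℝ≥0∞) : Prop where
  map_zero : l 0 = 0
  map_add : ∀ a b : S, l (a + b) = l a + l b
  mono : ∀ a b : S, a ≤ b → l a ≤ l b
  map_lub : ∀ f : ℕ → S, Monotone f → ∀ s : S, IsLUB (Set.range f) s → l s = ⨆ n : ℕ, l (f n)

/-- An element `a` of a Cu-semigroup is soft if every `a' ≪ a` satisfies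
`(n+1)•a' ≤ n•a` for some `n`. -/
def CuSoft {S : Type*} [AddCommMonoid S] [PartialOrder S] (a : S) : Prop :=
  ∀ a' : S, CuWayBelow a' a → ∃ n : ℕ, (n + 1) • a' ≤ n • a

/-!
By (O2) it suffices to show `x ≤ b` for every `x ≪ a`. If this fails, almost unperforation
gives `(k + 1) • x ≰ k • b` for all `k`, and a Hahn–Banach type argument (Zorn's lemma over
partial states, each extended by the largest admissible value) yields an additive
order-preserving `f : S → [0,∞]` with `f b ≤ 1 ≤ f x`. Its regularization
`λ y = ⨆ {f y' | y' ≪ y}` is a functional with `λ b ≤ 1` and `λ z ≥ 1` for some `x ≪ z ≪ a`.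
Softness of `a` gives `(m + 1) • z ≤ m • a`, hence `m + 1 ≤ (m + 1) λ z ≤ m λ a ≤ m λ b ≤ m`.
-/

theorem le_mul_sInf_of_forall_le_mul {U : Set ℝ} (hU : U.Nonempty) {a t : ℝ} (ha : 0 ≤ a)
    (h : ∀ r ∈ U, t ≤ a * r) : t ≤ a * sInf U := by
  rw [← smul_eq_mul, ← Real.sInf_smul_of_nonneg ha]
  exact le_csInf hU.smul_set (by rintro _ ⟨r, hr, rfl⟩; exact h r hr)

section OrderedMonoid

variable {S : Type*} [AddCommMonoid S] [PartialOrder S] [IsOrderedAddMonoid S]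

theorem nsmul_add_le_nsmul_add {x y c : S} (h : x + c ≤ y + c) (m : ℕ) :
    m • x + c ≤ m • y + c := by
  induction m with
  | zero => simp
  | succ m ih =>
    calc (m + 1) • x + c = m • x + (x + c) := by rw [succ_nsmul, add_assoc]
    _ ≤ m • x + (y + c) := by gcongr
    _ = y + (m • x + c) := by abel
    _ ≤ y + (m • y + c) := by gcongr
    _ = (m + 1) • y + c := by rw [succ_nsmul']; abel

variable {b z : S}

theorem le_of_nsmul_le_nsmul_of_not_succ_nsmul_le (h0 : ∀ x : S, 0 ≤ x) {N : ℕ}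
    (hzN : z ≤ N • b) (hk : ¬∃ k : ℕ, (k + 1) • z ≤ k • b) {p q : ℕ} (h : p • b ≤ q • b) :
    p ≤ q := by
  by_contra! hqp
  have hb : b + q • b ≤ 0 + q • b := by
    rw [zero_add, ← succ_nsmul']
    exact (nsmul_le_nsmul_left (h0 b) hqp).trans h
  have hmul (m : ℕ) : m • b ≤ q • b := by
    have := nsmul_add_le_nsmul_add hb m
    rw [nsmul_zero, zero_add] at this
    exact (le_add_of_nonneg_right (h0 _)).trans this
  refine hk ⟨q, ?_⟩
  calc (q + 1) • z ≤ (q + 1) • N • b := nsmul_le_nsmul_right hzN _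
  _ = ((q + 1) * N) • b := (mul_nsmul' b _ _).symm
  _ ≤ q • b := hmul _

theorem add_le_of_nsmul_add_nsmul_le_of_not_succ_nsmul_le (h0 : ∀ x : S, 0 ≤ x)
    (hk : ¬∃ k : ℕ, (k + 1) • z ≤ k • b) {n p q : ℕ} (hn : 0 < n)
    (h : n • z + p • b ≤ q • b) : p + n ≤ q := by
  obtain ⟨m, rfl⟩ : ∃ m, n = m + 1 := ⟨n - 1, by omega⟩
  by_contra! hq
  have hle : (m + 1) • z + p • b ≤ m • b + p • b := by
    rw [← add_nsmul]
    exact h.trans (nsmul_le_nsmul_left (h0 b) (by omega))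
  refine hk ⟨(p + 1) * m + p, ?_⟩
  calc ((p + 1) * m + p + 1) • z = (p + 1) • (m + 1) • z := by
        rw [← mul_nsmul']; ring_nf
  _ ≤ (p + 1) • (m + 1) • z + p • b := le_add_of_nonneg_right (h0 _)
  _ ≤ (p + 1) • m • b + p • b := nsmul_add_le_nsmul_add hle _
  _ = ((p + 1) * m + p) • b := by rw [← mul_nsmul', ← add_nsmul]

end OrderedMonoid

section Ideal

variable {S : Type*} [AddCommMonoid S] [PartialOrder S]

/-- `x` lies in the order ideal generated by `b` (in Cu-notation, `x ≤ ∞ • b`). -/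
def LeMultiple (x b : S) : Prop := ∃ n : ℕ, x ≤ n • b

theorem LeMultiple.of_le {x y b : S} (hy : LeMultiple y b) (hxy : x ≤ y) : LeMultiple x b :=
  hy.imp fun _ hn => hxy.trans hn

variable [IsOrderedAddMonoid S]

theorem LeMultiple.add {x y b : S} (hx : LeMultiple x b) (hy : LeMultiple y b) :
    LeMultiple (x + y) b := by
  obtain ⟨m, hm⟩ := hx
  obtain ⟨n, hn⟩ := hy
  exact ⟨m + n, by rw [add_nsmul]; exact add_le_add hm hn⟩

theorem LeMultiple.nsmul {y b : S} (hy : LeMultiple y b) (m : ℕ) : LeMultiple (m • y) b := by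
  obtain ⟨n, hn⟩ := hy
  exact ⟨m * n, by rw [mul_nsmul']; exact nsmul_le_nsmul_right hn m⟩

theorem exists_addMonoidHom_of_additive_on_ideal (h0 : ∀ x : S, 0 ≤ x) (b : S)
    (φ : S → ℝ≥0∞) (hφ0 : φ 0 = 0)
    (hadd : ∀ x y, LeMultiple (x + y) b → φ (x + y) = φ x + φ y)
    (hmono : ∀ x y, x ≤ y → LeMultiple y b → φ x ≤ φ y) :
    ∃ f : S →+ ℝ≥0∞, Monotone f ∧ (∀ x, LeMultiple x b → f x = φ x) ∧
      ∀ x, ¬LeMultiple x b → f x = ⊤ := by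
  classical
  refine ⟨⟨⟨fun x => if LeMultiple x b then φ x else ⊤, ?_⟩, ?_⟩, ?_, fun x hx => if_pos hx,
    fun x hx => if_neg hx⟩
  · exact (if_pos (⟨0, by simp⟩ : LeMultiple (0 : S) b)).trans hφ0
  · intro x y
    by_cases hxy : LeMultiple (x + y) b
    · simp only [if_pos hxy, if_pos (hxy.of_le (le_add_of_nonneg_right (h0 y))),
        if_pos (hxy.of_le (le_add_of_nonneg_left (h0 x))), hadd x y hxy]
    · have : ¬(LeMultiple x b ∧ LeMultiple y b) := fun h => hxy (h.1.add h.2)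
      rcases not_and_or.mp this with hx | hy
      · simp [hxy, hx]
      · simp [hxy, hy]
  · intro x y hxy
    show (if LeMultiple x b then φ x else ⊤) ≤ if LeMultiple y b then φ y else ⊤
    by_cases hy : LeMultiple y b
    · rw [if_pos hy, if_pos (hy.of_le hxy)]
      exact hmono x y hxy hy
    · rw [if_neg hy]
      exact le_top

end Ideal

section PartialState

variable {S : Type*} [AddCommMonoid S]

def adjoin (G : Set (S × ℝ)) (y : S) (c : ℝ) : Set (S × ℝ) :=
  {p | ∃ q ∈ G, ∃ n : ℕ, p = q + n • (y, c)}

theorem subset_adjoin (G : Set (S × ℝ)) (y : S) (c : ℝ) : G ⊆ adjoin G y c :=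
  fun p hp => ⟨p, hp, 0, by simp⟩

theorem mem_adjoin_self {G : Set (S × ℝ)} (hG : 0 ∈ G) (y : S) (c : ℝ) : (y, c) ∈ adjoin G y c :=
  ⟨0, hG, 1, by simp⟩

variable [PartialOrder S]

/-- The graph of a partial state on the order ideal generated by `b`, normalized at `b`: an
additive, order-preserving, real-valued function whose domain is a submonoid of that ideal. -/
structure IsPartialState (b : S) (G : Set (S × ℝ)) : Prop where
  zero_mem : 0 ∈ G
  unit_mem : (b, 1) ∈ G
  add_mem : ∀ p ∈ G, ∀ q ∈ G, p + q ∈ G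
  mono : ∀ p ∈ G, ∀ q ∈ G, p.1 ≤ q.1 → p.2 ≤ q.2
  leMultiple : ∀ p ∈ G, LeMultiple p.1 b

/-- The ratios `(q - p) / n` for `p + n • y ≤ q` in `G`: every value of `y` in an extension
of `G` is at most each of them, and their infimum is the largest admissible value. -/
def upperRatios (G : Set (S × ℝ)) (y : S) : Set ℝ :=
  {r | ∃ n : ℕ, 0 < n ∧ ∃ p ∈ G, ∃ q ∈ G, p.1 + n • y ≤ q.1 ∧ r = (q.2 - p.2) / n}

variable {b : S} {G : Set (S × ℝ)}

theorem IsPartialState.nsmul_mem (hG : IsPartialState b G) {p : S × ℝ} (hp : p ∈ G) (n : ℕ) :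
    n • p ∈ G := by
  induction n with
  | zero => simpa using hG.zero_mem
  | succ n ih => simpa [succ_nsmul] using hG.add_mem _ ih _ hp

theorem upperRatios_nonempty (hG : IsPartialState b G) {y : S} (hy : LeMultiple y b) :
    (upperRatios G y).Nonempty := by
  obtain ⟨N, hN⟩ := hy
  exact ⟨_, 1, one_pos, 0, hG.zero_mem, N • (b, 1), hG.nsmul_mem hG.unit_mem N,
    by simpa using hN, rfl⟩

theorem IsPartialState.sUnion {C : Set (Set (S × ℝ))} (hC : ∀ G ∈ C, IsPartialState b G)
    (hchain : IsChain (· ⊆ ·) C) (hne : C.Nonempty) : IsPartialState b (⋃₀ C) := by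
  obtain ⟨G₀, hG₀⟩ := hne
  refine ⟨⟨G₀, hG₀, (hC G₀ hG₀).zero_mem⟩, ⟨G₀, hG₀, (hC G₀ hG₀).unit_mem⟩, ?_, ?_,
    fun p ⟨G, hG, hp⟩ => (hC G hG).leMultiple p hp⟩
  · rintro p ⟨G, hG, hp⟩ q ⟨G', hG', hq⟩
    rcases hchain.total hG hG' with h | h
    · exact ⟨G', hG', (hC G' hG').add_mem p (h hp) q hq⟩
    · exact ⟨G, hG, (hC G hG).add_mem p hp q (h hq)⟩
  · rintro p ⟨G, hG, hp⟩ q ⟨G', hG', hq⟩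
    rcases hchain.total hG hG' with h | h
    · exact (hC G' hG').mono p (h hp) q hq
    · exact (hC G hG).mono p hp q (h hq)

theorem IsPartialState.nonneg (h0 : ∀ x : S, 0 ≤ x) (hG : IsPartialState b G) {p : S × ℝ}
    (hp : p ∈ G) : 0 ≤ p.2 :=
  hG.mono 0 hG.zero_mem p hp (h0 p.1)

variable [IsOrderedAddMonoid S]

theorem nonneg_of_mem_upperRatios (h0 : ∀ x : S, 0 ≤ x) (hG : IsPartialState b G) {y : S}
    {r : ℝ} (hr : r ∈ upperRatios G y) : 0 ≤ r := by
  obtain ⟨n, -, p, hp, q, hq, hpq, rfl⟩ := hr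
  have := hG.mono p hp q hq ((le_add_of_nonneg_right (h0 _)).trans hpq)
  exact div_nonneg (by linarith) n.cast_nonneg

theorem IsPartialState.add_mul_sInf_le (h0 : ∀ x : S, 0 ≤ x) (hG : IsPartialState b G) {y : S}
    {p q : S × ℝ} (hp : p ∈ G) (hq : q ∈ G) {m : ℕ} (h : p.1 + m • y ≤ q.1) :
    p.2 + m * sInf (upperRatios G y) ≤ q.2 := by
  rcases Nat.eq_zero_or_pos m with rfl | hm
  · simpa using hG.mono p hp q hq (by simpa using h)
  · have hc : sInf (upperRatios G y) ≤ (q.2 - p.2) / m :=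
      csInf_le ⟨0, fun _ => nonneg_of_mem_upperRatios h0 hG⟩ ⟨m, hm, p, hp, q, hq, h, rfl⟩
    rw [le_div_iff₀ (by exact_mod_cast hm)] at hc
    linarith

theorem IsPartialState.add_mul_sInf_le_add_mul_sInf (h0 : ∀ x : S, 0 ≤ x)
    (hG : IsPartialState b G) {y : S} (hy : LeMultiple y b) {p q : S × ℝ} (hp : p ∈ G)
    (hq : q ∈ G) {n₁ n₂ : ℕ} (h : p.1 + n₁ • y ≤ q.1 + n₂ • y) :
    p.2 + n₁ * sInf (upperRatios G y) ≤ q.2 + n₂ * sInf (upperRatios G y) := by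
  set c := sInf (upperRatios G y)
  suffices ∀ r ∈ upperRatios G y, p.2 + n₁ * c - q.2 ≤ n₂ * r by
    linarith [le_mul_sInf_of_forall_le_mul (upperRatios_nonempty hG hy) n₂.cast_nonneg this]
  rintro _ ⟨n, hn, u, hu, v, hv, huv, rfl⟩
  -- Scale `h` by `n` and the witness `u.1 + n • y ≤ v.1` by `n₂`; this absorbs `(n * n₂) • y`.
  have hle : (n • p + n₂ • u).1 + (n * n₁) • y ≤ (n • q + n₂ • v).1 := by
    simp only [Prod.fst_add, Prod.smul_fst]
    calc n • p.1 + n₂ • u.1 + (n * n₁) • y = n • (p.1 + n₁ • y) + n₂ • u.1 := by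
          rw [nsmul_add, mul_nsmul']; abel
    _ ≤ n • (q.1 + n₂ • y) + n₂ • u.1 := by gcongr
    _ = n • q.1 + n₂ • (u.1 + n • y) := by
          rw [nsmul_add, nsmul_add, ← mul_nsmul', ← mul_nsmul', mul_comm]; abel
    _ ≤ n • q.1 + n₂ • v.1 := by gcongr
  have := hG.add_mul_sInf_le h0 (hG.add_mem _ (hG.nsmul_mem hp n) _ (hG.nsmul_mem hu n₂))
    (hG.add_mem _ (hG.nsmul_mem hq n) _ (hG.nsmul_mem hv n₂)) hle
  simp only [Prod.snd_add, Prod.smul_snd, nsmul_eq_mul, Nat.cast_mul] at this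
  rw [mul_div_assoc', le_div_iff₀ (by exact_mod_cast hn)]
  linarith

theorem IsPartialState.adjoin_sInf (h0 : ∀ x : S, 0 ≤ x) (hG : IsPartialState b G) {y : S}
    (hy : LeMultiple y b) : IsPartialState b (adjoin G y (sInf (upperRatios G y))) where
  zero_mem := ⟨0, hG.zero_mem, 0, by simp⟩
  unit_mem := ⟨_, hG.unit_mem, 0, by simp⟩
  add_mem := by
    rintro _ ⟨p, hp, m, rfl⟩ _ ⟨q, hq, n, rfl⟩
    exact ⟨p + q, hG.add_mem p hp q hq, m + n, by rw [add_nsmul]; abel⟩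
  mono := by
    rintro _ ⟨p, hp, m, rfl⟩ _ ⟨q, hq, n, rfl⟩ hle
    simpa [nsmul_eq_mul] using hG.add_mul_sInf_le_add_mul_sInf h0 hy hp hq (by simpa using hle)
  leMultiple := by
    rintro _ ⟨p, hp, m, rfl⟩
    simpa using (hG.leMultiple p hp).add (hy.nsmul m)

theorem IsPartialState.exists_total_extension (h0 : ∀ x : S, 0 ≤ x) (hG : IsPartialState b G) :
    ∃ M, G ⊆ M ∧ IsPartialState b M ∧ ∀ x, LeMultiple x b → ∃ r, (x, r) ∈ M := by
  obtain ⟨M, hGM, hM⟩ := zorn_subset_nonempty {M | IsPartialState b M ∧ G ⊆ M}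
    (fun C hC hchain hne => ⟨⋃₀ C, ⟨.sUnion (fun G hG => (hC hG).1) hchain hne,
      (hC hne.some_mem).2.trans (Set.subset_sUnion_of_mem hne.some_mem)⟩,
      fun _ => Set.subset_sUnion_of_mem⟩) G ⟨hG, subset_rfl⟩
  refine ⟨M, hGM, hM.prop.1, fun x hx => ⟨sInf (upperRatios M x), ?_⟩⟩
  have hMx := hM.eq_of_subset ⟨hM.prop.1.adjoin_sInf h0 hx, hM.prop.2.trans (subset_adjoin _ _ _)⟩
    (subset_adjoin _ _ _)
  exact (Set.ext_iff.mp hMx _).2 (mem_adjoin_self hM.prop.1.zero_mem _ _)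

theorem IsPartialState.exists_addMonoidHom (h0 : ∀ x : S, 0 ≤ x) (hG : IsPartialState b G) :
    ∃ f : S →+ ℝ≥0∞, Monotone f ∧ ∀ p ∈ G, f p.1 = ENNReal.ofReal p.2 := by
  obtain ⟨M, hGM, hM, htotal⟩ := hG.exists_total_extension h0
  -- the value of `M` at `x`, which is unique since `M` is order-preserving
  set φ : S → ℝ≥0∞ := fun x => ⨆ (r : ℝ) (_ : (x, r) ∈ M), ENNReal.ofReal r
  have hφ {x : S} {r : ℝ} (hr : (x, r) ∈ M) : φ x = ENNReal.ofReal r :=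
    le_antisymm (iSup₂_le fun s hs => ENNReal.ofReal_le_ofReal (hM.mono _ hs _ hr le_rfl))
      (le_iSup₂ (f := fun (s : ℝ) (_ : (x, s) ∈ M) => ENNReal.ofReal s) r hr)
  obtain ⟨f, hf, hfφ, -⟩ := exists_addMonoidHom_of_additive_on_ideal h0 b φ
    (by simpa using hφ hM.zero_mem)
    (fun x y hxy => by
      obtain ⟨r, hr⟩ := htotal x (hxy.of_le (le_add_of_nonneg_right (h0 y)))
      obtain ⟨s, hs⟩ := htotal y (hxy.of_le (le_add_of_nonneg_left (h0 x)))
      rw [hφ hr, hφ hs, hφ (hM.add_mem _ hr _ hs),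
        ENNReal.ofReal_add (hM.nonneg h0 hr) (hM.nonneg h0 hs)])
    (fun x y hxy hy => by
      obtain ⟨s, hs⟩ := htotal y hy
      obtain ⟨r, hr⟩ := htotal x (hy.of_le hxy)
      rw [hφ hr, hφ hs]
      exact ENNReal.ofReal_le_ofReal (hM.mono _ hr _ hs hxy))
  exact ⟨f, hf, fun p hp => (hfφ p.1 (hM.leMultiple p (hGM hp))).trans (hφ (hGM hp))⟩

variable {z : S}

theorem isPartialState_range_nsmul (h0 : ∀ x : S, 0 ≤ x) {N : ℕ} (hzN : z ≤ N • b)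
    (hk : ¬∃ k : ℕ, (k + 1) • z ≤ k • b) :
    IsPartialState b (Set.range fun n : ℕ => n • ((b, 1) : S × ℝ)) where
  zero_mem := ⟨0, zero_nsmul _⟩
  unit_mem := ⟨1, one_nsmul _⟩
  add_mem := by
    rintro _ ⟨m, rfl⟩ _ ⟨n, rfl⟩
    exact ⟨m + n, add_nsmul _ _ _⟩
  mono := by
    rintro _ ⟨m, rfl⟩ _ ⟨n, rfl⟩ hmn
    simpa using le_of_nsmul_le_nsmul_of_not_succ_nsmul_le h0 hzN hk (by simpa using hmn)
  leMultiple := by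
    rintro _ ⟨n, rfl⟩
    exact ⟨n, by simp⟩

theorem one_le_sInf_upperRatios_range_nsmul (h0 : ∀ x : S, 0 ≤ x) {N : ℕ} (hzN : z ≤ N • b)
    (hk : ¬∃ k : ℕ, (k + 1) • z ≤ k • b) :
    1 ≤ sInf (upperRatios (Set.range fun n : ℕ => n • ((b, 1) : S × ℝ)) z) := by
  refine le_csInf (upperRatios_nonempty (isPartialState_range_nsmul h0 hzN hk) ⟨N, hzN⟩) ?_
  rintro _ ⟨n, hn, _, ⟨p, rfl⟩, _, ⟨q, rfl⟩, hpq, rfl⟩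
  have := add_le_of_nsmul_add_nsmul_le_of_not_succ_nsmul_le h0 hk hn
    (by simpa [add_comm] using hpq)
  simp only [Prod.smul_snd, nsmul_eq_mul, mul_one]
  rw [le_div_iff₀ (by exact_mod_cast hn)]
  have : (p : ℝ) + n ≤ q := by exact_mod_cast this
  linarith

theorem exists_addMonoidHom_le_one_le_of_not_succ_nsmul_le (h0 : ∀ x : S, 0 ≤ x)
    (hk : ¬∃ k : ℕ, (k + 1) • z ≤ k • b) :
    ∃ f : S →+ ℝ≥0∞, Monotone f ∧ f b ≤ 1 ∧ 1 ≤ f z := by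
  by_cases hz : LeMultiple z b
  · obtain ⟨N, hzN⟩ := hz
    have hGb := isPartialState_range_nsmul h0 hzN hk
    obtain ⟨f, hf, hfG⟩ := (hGb.adjoin_sInf h0 ⟨N, hzN⟩).exists_addMonoidHom h0
    refine ⟨f, hf, ?_, ?_⟩
    · exact (by simpa using hfG _ (subset_adjoin _ _ _ hGb.unit_mem) : f b = 1).le
    · rw [hfG _ (mem_adjoin_self hGb.zero_mem _ _)]
      simpa using ENNReal.ofReal_le_ofReal (one_le_sInf_upperRatios_range_nsmul h0 hzN hk)
  · obtain ⟨f, hf, hfb, hftop⟩ := exists_addMonoidHom_of_additive_on_ideal h0 b 0 rfl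
      (fun _ _ _ => by simp) (fun _ _ _ _ => le_rfl)
    exact ⟨f, hf, by simp [hfb b ⟨1, by simp⟩], by simp [hftop z hz]⟩

end PartialState

section WayBelow

variable {S : Type*} [Preorder S]

theorem CuWayBelow.le {x y : S} (h : CuWayBelow x y) : x ≤ y :=
  (h (fun _ => y) monotone_const y (by rw [Set.range_const]; exact isLUB_singleton) le_rfl).elim
    fun _ => id

theorem CuWayBelow.trans_le {x y z : S} (h : CuWayBelow x y) (hyz : y ≤ z) : CuWayBelow x z :=
  fun f hf s hs hzs => h f hf s hs (hyz.trans hzs)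

theorem CuWayBelow.of_le_left {x y z : S} (h : CuWayBelow y z) (hxy : x ≤ y) :
    CuWayBelow x z :=
  fun f hf s hs hzs => (h f hf s hs hzs).imp fun _ => hxy.trans

theorem monotone_of_cuWayBelow_succ {f : ℕ → S} (hf : ∀ n, CuWayBelow (f n) (f (n + 1))) :
    Monotone f :=
  monotone_nat_of_le_succ fun n => (hf n).le

theorem cuWayBelow_of_cuWayBelow_succ_of_isLUB {f : ℕ → S} {x : S}
    (hf : ∀ n, CuWayBelow (f n) (f (n + 1))) (hx : IsLUB (Set.range f) x) (n : ℕ) :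
    CuWayBelow (f n) x :=
  (hf n).trans_le (hx.1 ⟨n + 1, rfl⟩)

noncomputable def cuRegularization (f : S → ℝ≥0∞) (x : S) : ℝ≥0∞ :=
  ⨆ x' : {x' // CuWayBelow x' x}, f x'

theorem cuRegularization_le {f : S → ℝ≥0∞} (hf : Monotone f) (x : S) :
    cuRegularization f x ≤ f x :=
  iSup_le fun x' => hf x'.2.le

theorem le_cuRegularization (f : S → ℝ≥0∞) {x' x : S} (h : CuWayBelow x' x) :
    f x' ≤ cuRegularization f x :=
  le_iSup (fun x' : {x' // CuWayBelow x' x} => f x') ⟨x', h⟩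

theorem monotone_cuRegularization (f : S → ℝ≥0∞) : Monotone (cuRegularization f) :=
  fun _ _ hxy => iSup_le fun x' => le_cuRegularization f (x'.2.trans_le hxy)

end WayBelow

section CuSemigroup

variable {S : Type*} [AddCommMonoid S] [PartialOrder S]

theorem IsCuSemigroup.isOrderedAddMonoid (hS : IsCuSemigroup S) : IsOrderedAddMonoid S :=
  .mk (fun a b h c => hS.add_le_add a b c h)
    (fun a b h c => by simpa only [add_comm c] using hS.add_le_add a b c h)

theorem IsCuSemigroup.cuWayBelow_zero_left (hS : IsCuSemigroup S) (x : S) : CuWayBelow 0 x :=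
  fun _ _ _ _ _ => ⟨0, hS.zero_le _⟩

theorem IsCuSemigroup.exists_cuWayBelow_cuWayBelow (hS : IsCuSemigroup S) {x y : S}
    (h : CuWayBelow x y) : ∃ z, CuWayBelow x z ∧ CuWayBelow z y := by
  obtain ⟨g, hg, hy⟩ := hS.O2 y
  obtain ⟨n, hn⟩ := h g (monotone_of_cuWayBelow_succ hg) y hy le_rfl
  exact ⟨g (n + 1), (hg n).of_le_left hn, cuWayBelow_of_cuWayBelow_succ_of_isLUB hg hy _⟩

theorem IsCuSemigroup.le_of_forall_cuWayBelow_le (hS : IsCuSemigroup S) {x y : S}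
    (h : ∀ x', CuWayBelow x' x → x' ≤ y) : x ≤ y := by
  obtain ⟨g, hg, hx⟩ := hS.O2 x
  exact hx.2 <| Set.forall_mem_range.2 fun n =>
    h _ (cuWayBelow_of_cuWayBelow_succ_of_isLUB hg hx n)

theorem IsCuSemigroup.exists_le_add_of_cuWayBelow_add (hS : IsCuSemigroup S) {x y z : S}
    (h : CuWayBelow z (x + y)) : ∃ x' y', CuWayBelow x' x ∧ CuWayBelow y' y ∧ z ≤ x' + y' := by
  have := hS.isOrderedAddMonoid
  obtain ⟨g, hg, hx⟩ := hS.O2 x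
  obtain ⟨g', hg', hy⟩ := hS.O2 y
  have hmono := monotone_of_cuWayBelow_succ hg
  have hmono' := monotone_of_cuWayBelow_succ hg'
  obtain ⟨n, hn⟩ := h _ (hmono.add hmono') _ (hS.O4 g g' hmono hmono' x y hx hy) le_rfl
  exact ⟨g n, g' n, cuWayBelow_of_cuWayBelow_succ_of_isLUB hg hx n,
    cuWayBelow_of_cuWayBelow_succ_of_isLUB hg' hy n, hn⟩

theorem IsCuSemigroup.cuRegularization_add (hS : IsCuSemigroup S) {f : S →+ ℝ≥0∞}
    (hf : Monotone f) (x y : S) :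
    cuRegularization f (x + y) = cuRegularization f x + cuRegularization f y := by
  have : ∀ x : S, Nonempty {x' // CuWayBelow x' x} := fun x => ⟨⟨0, hS.cuWayBelow_zero_left x⟩⟩
  refine le_antisymm (iSup_le fun ⟨z, hz⟩ => ?_)
    (ENNReal.iSup_add_iSup_le fun x' y' => ?_)
  · obtain ⟨x', y', hx', hy', hz⟩ := hS.exists_le_add_of_cuWayBelow_add hz
    calc f z ≤ f (x' + y') := hf hz
    _ = f x' + f y' := map_add f x' y'
    _ ≤ cuRegularization f x + cuRegularization f y :=
        _root_.add_le_add (le_cuRegularization f hx') (le_cuRegularization f hy')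
  · rw [← map_add]
    exact le_cuRegularization f (hS.O3 _ _ _ _ x'.2 y'.2)

theorem IsCuSemigroup.cuRegularization_isLUB (hS : IsCuSemigroup S) (f : S → ℝ≥0∞)
    {g : ℕ → S} (hg : Monotone g) {s : S} (hs : IsLUB (Set.range g) s) :
    cuRegularization f s = ⨆ n, cuRegularization f (g n) := by
  refine le_antisymm (iSup_le fun ⟨z, hz⟩ => ?_)
    (iSup_le fun n => monotone_cuRegularization f (hs.1 ⟨n, rfl⟩))
  obtain ⟨z', hzz', hz's⟩ := hS.exists_cuWayBelow_cuWayBelow hz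
  obtain ⟨n, hn⟩ := hz's g hg s hs le_rfl
  exact (le_cuRegularization f (hzz'.trans_le hn)).trans
    (le_iSup (fun n => cuRegularization f (g n)) n)

theorem IsCuSemigroup.isCuFunctional_cuRegularization (hS : IsCuSemigroup S)
    {f : S →+ ℝ≥0∞} (hf : Monotone f) : IsCuFunctional (cuRegularization f) where
  map_zero := le_antisymm ((cuRegularization_le hf 0).trans_eq (map_zero f)) bot_le
  map_add := hS.cuRegularization_add hf
  mono := monotone_cuRegularization f
  map_lub _ hg _ hs := hS.cuRegularization_isLUB f hg hs

theorem IsCuFunctional.map_nsmul {l : S → ℝ≥0∞} (hl : IsCuFunctional l) (n : ℕ) (x : S) :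
    l (n • x) = n * l x := by
  rw [← nsmul_eq_mul]
  exact _root_.map_nsmul (⟨⟨l, hl.map_zero⟩, hl.map_add⟩ : S →+ ℝ≥0∞) n x

theorem IsCuFunctional.lt_one_of_cuWayBelow_of_cuSoft {l : S → ℝ≥0∞} (hl : IsCuFunctional l)
    {a z : S} (ha : CuSoft a) (hz : CuWayBelow z a) (hla : l a ≤ 1) : l z < 1 := by
  obtain ⟨m, hm⟩ := ha z hz
  have := hl.mono _ _ hm
  rw [hl.map_nsmul, hl.map_nsmul] at this
  by_contra! hlz
  have : (m + 1 : ℝ≥0∞) ≤ m :=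
    calc (m + 1 : ℝ≥0∞) = (m + 1 : ℕ) * 1 := by push_cast; ring
    _ ≤ (m + 1 : ℕ) * l z := by gcongr
    _ ≤ m * l a := this
    _ ≤ m * 1 := by gcongr
    _ = m := mul_one _
  exact (ENNReal.lt_add_right (ENNReal.natCast_ne_top m) one_ne_zero).not_ge this

end CuSemigroup

/-- Let `S` be an almost unperforated Cu-semigroup and let
`a b ∈ S` with `a` soft.  Then `a ≤ b` iff `λ a ≤ λ b` for every functional
`λ` on `S`. -/
theorem stmt14 {S : Type*} [AddCommMonoid S] [PartialOrder S]
    (hS : IsCuSemigroup S)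
    (hau : ∀ a b : S, (∃ k : ℕ, (k + 1) • a ≤ k • b) → a ≤ b)
    (a b : S) (ha : CuSoft a) :
    a ≤ b ↔ ∀ lam : S → ℝ≥0∞, IsCuFunctional lam → lam a ≤ lam b := by
  have := hS.isOrderedAddMonoid
  refine ⟨fun hab lam hlam => hlam.mono a b hab, fun hle => ?_⟩
  refine hS.le_of_forall_cuWayBelow_le fun x hx => hau x b ?_
  by_contra hk
  obtain ⟨z, hxz, hza⟩ := hS.exists_cuWayBelow_cuWayBelow hx
  obtain ⟨f, hf, hfb, hfx⟩ := exists_addMonoidHom_le_one_le_of_not_succ_nsmul_le hS.zero_le hk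
  have hlam := hS.isCuFunctional_cuRegularization hf
  have hlama : cuRegularization f a ≤ 1 :=
    (hle _ hlam).trans ((cuRegularization_le hf b).trans hfb)
  exact (hlam.lt_one_of_cuWayBelow_of_cuSoft ha hza hlama).not_ge
    (hfx.trans (le_cuRegularization f hxz))
end
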